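/- arXiv:2201.11536 — 3 statements merged into one kernel-verified Lean document; each statement's English description precedes it below -/
import Mathlib

section
/- For a decision diagram D with binary arc values, the projection onto the x-variables of the network flow polytope NF(D) equals the convex hull of Sol(D). -/
/-- A layered decision diagram with `n` arc layers. Arcs in layer `i`
carry a value (variable assignment) and a length (objective contribution). -/
structure DD (n : ℕ) where
  V : Type
  Arc : Type
  src : Arc → V
  tgt : Arc → V
  lay : Arc → Fin n
  val : Arc → ℤ
  len : Arc → ℝ
  root : V
  terminal : V

namespace DD

variable {n : ℕ}

/-- `p` is a root-to-terminal path: one arc per layer, consecutive arcs chained,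
starting at the root and ending at the terminal. -/
def IsPath (D : DD n) (p : Fin n → D.Arc) : Prop :=
  (∀ i, D.lay (p i) = i) ∧
  (∀ i : Fin n, i.val = 0 → D.src (p i) = D.root) ∧
  (∀ i : Fin n, i.val + 1 = n → D.tgt (p i) = D.terminal) ∧
  (∀ i : Fin n, ∀ h : i.val + 1 < n, D.tgt (p i) = D.src (p ⟨i.val + 1, h⟩))

/-- The integer point encoded by a path. -/
def point (D : DD n) (p : Fin n → D.Arc) : Fin n → ℤ := fun i => D.val (p i)

/-- The real point encoded by a path. -/
def pointR (D : DD n) (p : Fin n → D.Arc) : Fin n → ℝ := fun i => (D.val (p i) : ℝ)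

/-- The length of a path. -/
def plen (D : DD n) (p : Fin n → D.Arc) : ℝ := ∑ i, D.len (p i)

/-- The solution set encoded by the diagram. -/
def Sol (D : DD n) : Set (Fin n → ℤ) := {x | ∃ p, D.IsPath p ∧ D.point p = x}

end DD

/-- The network flow polytope `NF(D)`: nonnegative arc flows with flow balance at
internal nodes, unit flow out of the root and into the terminal, and linking
constraints tying the `x` variables to the arc values. -/
def NF {n : ℕ} (D : DD n) [Fintype D.Arc] [DecidableEq D.V] :
    Set ((Fin n → ℝ) × (D.Arc → ℝ)) :=
  {xy | (∀ a, 0 ≤ xy.2 a) ∧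
    (∀ u : D.V, u ≠ D.root → u ≠ D.terminal →
      ∑ a ∈ Finset.univ.filter (fun a => D.src a = u), xy.2 a
        = ∑ a ∈ Finset.univ.filter (fun a => D.tgt a = u), xy.2 a) ∧
    (∑ a ∈ Finset.univ.filter (fun a => D.src a = D.root), xy.2 a = 1) ∧
    (∑ a ∈ Finset.univ.filter (fun a => D.tgt a = D.terminal), xy.2 a = 1) ∧
    (∀ i : Fin n, ∑ a ∈ Finset.univ.filter (fun a => D.lay a = i),
        (D.val a : ℝ) * xy.2 a = xy.1 i)}


/-!
A unit flow on a layered diagram decomposes into path flows. Following arcs of positive flow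
from the root yields a root-to-terminal path `p`; if `ε` is the smallest flow on `p`, then
`(1 - ε)⁻¹ • (y - ε • pathFlow p)` is again a unit flow, with strictly smaller support, so by
induction the unit flows are exactly the convex hull of the path flows. The `x`-part of `NF(D)`
is the image of the unit flows under the linear linking map, which sends the flow of a path to
the point it encodes, and linear maps commute with convex hulls.
-/

open Finset

theorem Finset.card_eq_of_nonempty_iff {α β : Type*} {s : Finset α} {t : Finset β}
    (hs : #s ≤ 1) (ht : #t ≤ 1) (h : s.Nonempty ↔ t.Nonempty) : #s = #t := by
  rw [← card_pos, ← card_pos] at h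
  omega

namespace DD

variable {n : ℕ} (D : DD n)

structure Layering where
  level : D.V → ℕ
  level_src : ∀ a, level (D.src a) = D.lay a
  level_tgt : ∀ a, level (D.tgt a) = D.lay a + 1
  level_root : level D.root = 0
  level_terminal : level D.terminal = n

namespace Layering

variable {D} (L : D.Layering) {a b : D.Arc}
include L

theorem src_ne_terminal (a : D.Arc) : D.src a ≠ D.terminal := fun h => by
  have := L.level_src a
  rw [h, L.level_terminal] at this
  omega

theorem tgt_ne_root (a : D.Arc) : D.tgt a ≠ D.root := fun h => by
  have := L.level_tgt a
  rw [h, L.level_root] at this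
  omega

theorem lay_eq_of_src_eq (h : D.src a = D.src b) : D.lay a = D.lay b :=
  Fin.ext (by rw [← L.level_src, ← L.level_src, h])

theorem lay_eq_of_tgt_eq (h : D.tgt a = D.tgt b) : D.lay a = D.lay b :=
  Fin.ext (by have := L.level_tgt a; rw [h, L.level_tgt] at this; omega)

theorem lay_add_one_of_tgt_eq_src (h : D.tgt b = D.src a) : (D.lay b : ℕ) + 1 = D.lay a := by
  rw [← L.level_tgt, ← L.level_src, h]

variable [DecidableEq D.V] {p : Fin n → D.Arc}

theorem card_src_eq_le_one (hp : D.IsPath p) (u : D.V) : #{i | D.src (p i) = u} ≤ 1 :=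
  card_le_one.2 fun i hi j hj => by
    simp only [mem_filter, mem_univ, true_and] at hi hj
    rw [← hp.1 i, ← hp.1 j, L.lay_eq_of_src_eq (hi.trans hj.symm)]

theorem card_tgt_eq_le_one (hp : D.IsPath p) (u : D.V) : #{i | D.tgt (p i) = u} ≤ 1 :=
  card_le_one.2 fun i hi j hj => by
    simp only [mem_filter, mem_univ, true_and] at hi hj
    rw [← hp.1 i, ← hp.1 j, L.lay_eq_of_tgt_eq (hi.trans hj.symm)]

end Layering

section Paths

variable {D} {p : Fin n → D.Arc}

theorem IsPath.injective (hp : D.IsPath p) : Function.Injective p :=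
  fun i j h => (hp.1 i).symm.trans (h ▸ hp.1 j)

theorem IsPath.exists_src_iff_exists_tgt (hp : D.IsPath p) {u : D.V} (hr : u ≠ D.root)
    (ht : u ≠ D.terminal) : (∃ i, D.src (p i) = u) ↔ ∃ i, D.tgt (p i) = u := by
  constructor
  · rintro ⟨j, rfl⟩
    have hj : j.val ≠ 0 := fun h => hr (hp.2.1 j h)
    have hlt : j.val - 1 + 1 < n := by omega
    refine ⟨⟨j.val - 1, by omega⟩, ?_⟩
    rw [hp.2.2.2 _ hlt]
    congr 2
    exact Fin.ext (by simp only; omega)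
  · rintro ⟨i, rfl⟩
    have hlt : i.val + 1 < n := by
      have := i.isLt
      have : i.val + 1 ≠ n := fun h => ht (hp.2.2.1 i h)
      omega
    exact ⟨⟨i.val + 1, hlt⟩, (hp.2.2.2 i hlt).symm⟩

variable [DecidableEq D.Arc]

def pathFlow (p : Fin n → D.Arc) : D.Arc → ℝ := ∑ i, Pi.single (p i) 1

theorem sum_mul_pathFlow (s : Finset D.Arc) (w : D.Arc → ℝ) :
    ∑ a ∈ s, w a * pathFlow p a = ∑ i with p i ∈ s, w (p i) := by
  simp only [pathFlow, Finset.sum_apply, Pi.single_apply, mul_sum, mul_ite, mul_one, mul_zero]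
  rw [sum_comm, sum_filter]
  exact sum_congr rfl fun i _ => sum_ite_eq' s (p i) w

theorem pathFlow_apply (a : D.Arc) : pathFlow p a = #{i | p i = a} := by
  simpa using sum_mul_pathFlow (p := p) {a} 1

theorem IsPath.pathFlow_apply_self (hp : D.IsPath p) (i : Fin n) : pathFlow p (p i) = 1 := by
  rw [pathFlow_apply, Nat.cast_eq_one, card_eq_one]
  exact ⟨i, by ext j; simp [hp.injective.eq_iff]⟩

theorem pathFlow_apply_of_notMem {a : D.Arc} (ha : ∀ i, p i ≠ a) : pathFlow p a = 0 := by
  simp [pathFlow_apply, ha]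

theorem IsPath.smul_pathFlow_le (hp : D.IsPath p) {y : D.Arc → ℝ} (hy : ∀ a, 0 ≤ y a) {ε : ℝ}
    (hε : ∀ i, ε ≤ y (p i)) (a : D.Arc) : ε * pathFlow p a ≤ y a := by
  by_cases ha : ∃ i, p i = a
  · obtain ⟨i, rfl⟩ := ha
    rw [hp.pathFlow_apply_self, mul_one]
    exact hε i
  · simp only [not_exists] at ha
    rw [pathFlow_apply_of_notMem ha, mul_zero]
    exact hy a

theorem IsPath.card_support_smul_sub_lt [Fintype D.Arc] (hp : D.IsPath p) {y : D.Arc → ℝ}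
    (hpos : ∀ i, 0 < y (p i)) (c : ℝ) (i₀ : Fin n) :
    #{a | (c • (y - y (p i₀) • pathFlow p)) a ≠ 0} < #{a | y a ≠ 0} := by
  refine card_lt_card ((ssubset_iff_of_subset fun a ha => ?_).2 ⟨p i₀, ?_, ?_⟩)
  · simp only [mem_filter, mem_univ, true_and] at ha ⊢
    contrapose! ha
    have hoff : ∀ i, p i ≠ a := fun i hi => (hpos i).ne' (hi ▸ ha)
    simp [ha, pathFlow_apply_of_notMem hoff]
  · simpa using (hpos i₀).ne'
  · simp [hp.pathFlow_apply_self]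

end Paths

variable [Fintype D.Arc]

def linking : (D.Arc → ℝ) →ₗ[ℝ] (Fin n → ℝ) where
  toFun y i := ∑ a ∈ univ.filter (fun a => D.lay a = i), (D.val a : ℝ) * y a
  map_add' y z := by ext i; simp [mul_add, sum_add_distrib]
  map_smul' c y := by ext i; simp [mul_sum, mul_left_comm]

@[simp]
theorem linking_apply (y : D.Arc → ℝ) (i : Fin n) :
    D.linking y i = ∑ a ∈ univ.filter (fun a => D.lay a = i), (D.val a : ℝ) * y a := rfl

variable {D} in
theorem IsPath.linking_pathFlow [DecidableEq D.Arc] {p : Fin n → D.Arc} (hp : D.IsPath p) :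
    D.linking (pathFlow p) = D.pointR p := by
  ext i
  rw [linking_apply, sum_mul_pathFlow]
  simp [hp.1, pointR, filter_eq']

variable [DecidableEq D.V]

def outFlow (u : D.V) : (D.Arc → ℝ) →ₗ[ℝ] ℝ where
  toFun y := ∑ a ∈ univ.filter (fun a => D.src a = u), y a
  map_add' _ _ := sum_add_distrib
  map_smul' _ _ := (mul_sum _ _ _).symm

def inFlow (u : D.V) : (D.Arc → ℝ) →ₗ[ℝ] ℝ where
  toFun y := ∑ a ∈ univ.filter (fun a => D.tgt a = u), y a
  map_add' _ _ := sum_add_distrib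
  map_smul' _ _ := (mul_sum _ _ _).symm

@[simp]
theorem outFlow_apply (u : D.V) (y : D.Arc → ℝ) :
    D.outFlow u y = ∑ a ∈ univ.filter (fun a => D.src a = u), y a := rfl

@[simp]
theorem inFlow_apply (u : D.V) (y : D.Arc → ℝ) :
    D.inFlow u y = ∑ a ∈ univ.filter (fun a => D.tgt a = u), y a := rfl

def IsBalanced (y : D.Arc → ℝ) : Prop :=
  ∀ u, u ≠ D.root → u ≠ D.terminal → D.outFlow u y = D.inFlow u y

structure IsUnitFlow (y : D.Arc → ℝ) : Prop where
  nonneg : ∀ a, 0 ≤ y a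
  balanced : D.IsBalanced y
  outFlow_root : D.outFlow D.root y = 1
  inFlow_terminal : D.inFlow D.terminal y = 1

theorem mem_NF_iff {x : Fin n → ℝ} {y : D.Arc → ℝ} :
    (x, y) ∈ NF D ↔ D.IsUnitFlow y ∧ D.linking y = x := by
  constructor
  · rintro ⟨hnonneg, hbal, hroot, hterm, hlink⟩
    exact ⟨⟨hnonneg, hbal, hroot, hterm⟩, funext hlink⟩
  · rintro ⟨⟨hnonneg, hbal, hroot, hterm⟩, rfl⟩
    exact ⟨hnonneg, hbal, hroot, hterm, fun _ => rfl⟩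

theorem convex_setOf_isUnitFlow : Convex ℝ {y | D.IsUnitFlow y} := by
  intro y hy z hz s t hs ht hst
  refine ⟨fun a => ?_, fun u hr hterm => ?_, ?_, ?_⟩
  · simpa using add_nonneg (mul_nonneg hs (hy.nonneg a)) (mul_nonneg ht (hz.nonneg a))
  · simp only [map_add, map_smul, hy.balanced u hr hterm, hz.balanced u hr hterm]
  · simp only [map_add, map_smul, hy.outFlow_root, hz.outFlow_root, smul_eq_mul, mul_one, hst]
  · simp only [map_add, map_smul, hy.inFlow_terminal, hz.inFlow_terminal, smul_eq_mul, mul_one,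
      hst]

variable {D}

theorem outFlow_pathFlow [DecidableEq D.Arc] (p : Fin n → D.Arc) (u : D.V) :
    D.outFlow u (pathFlow p) = #{i | D.src (p i) = u} := by
  simpa using sum_mul_pathFlow (p := p) (univ.filter fun a => D.src a = u) 1

theorem inFlow_pathFlow [DecidableEq D.Arc] (p : Fin n → D.Arc) (u : D.V) :
    D.inFlow u (pathFlow p) = #{i | D.tgt (p i) = u} := by
  simpa using sum_mul_pathFlow (p := p) (univ.filter fun a => D.tgt a = u) 1

variable {y z : D.Arc → ℝ}

theorem le_outFlow_src (hy : ∀ a, 0 ≤ y a) (a : D.Arc) : y a ≤ D.outFlow (D.src a) y :=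
  single_le_sum (fun b _ => hy b) (by simp)

theorem le_inFlow_tgt (hy : ∀ a, 0 ≤ y a) (a : D.Arc) : y a ≤ D.inFlow (D.tgt a) y :=
  single_le_sum (fun b _ => hy b) (by simp)

theorem exists_src_eq_of_outFlow_pos {u : D.V} (h : 0 < D.outFlow u y) :
    ∃ a, D.src a = u ∧ 0 < y a := by
  obtain ⟨a, ha, hya⟩ := exists_lt_of_sum_lt (f := fun _ => (0 : ℝ)) (by simpa using h)
  exact ⟨a, (mem_filter.1 ha).2, hya⟩

theorem IsUnitFlow.inv_one_sub_smul_sub (hy : D.IsUnitFlow y) (hz : D.IsUnitFlow z) {ε : ℝ}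
    (hε : ε < 1) (hle : ∀ a, ε * z a ≤ y a) : D.IsUnitFlow ((1 - ε)⁻¹ • (y - ε • z)) := by
  have hε' : (1 - ε)⁻¹ * (1 - ε * 1) = 1 := by rw [mul_one]; exact inv_mul_cancel₀ (by linarith)
  refine ⟨fun a => ?_, fun u hr ht => ?_, ?_, ?_⟩
  · simpa using mul_nonneg (inv_nonneg.2 (sub_nonneg.2 hε.le)) (sub_nonneg.2 (hle a))
  · simp only [map_smul, map_sub, hy.balanced u hr ht, hz.balanced u hr ht]
  · simpa only [map_smul, map_sub, hy.outFlow_root, hz.outFlow_root, smul_eq_mul] using hε'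
  · simpa only [map_smul, map_sub, hy.inFlow_terminal, hz.inFlow_terminal, smul_eq_mul] using hε'

namespace Layering

variable (L : D.Layering)
include L

theorem isUnitFlow_pathFlow [DecidableEq D.Arc] (hn : 0 < n) {p : Fin n → D.Arc}
    (hp : D.IsPath p) : D.IsUnitFlow (pathFlow p) := by
  have hone {s : Finset (Fin n)} (h : #s ≤ 1) (hne : s.Nonempty) : (#s : ℝ) = 1 := by
    rw [Nat.cast_eq_one]; have := card_pos.2 hne; omega
  refine ⟨fun a => by rw [pathFlow_apply]; positivity, fun u hr ht => ?_, ?_, ?_⟩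
  · rw [outFlow_pathFlow, inFlow_pathFlow, Nat.cast_inj]
    refine card_eq_of_nonempty_iff (L.card_src_eq_le_one hp u) (L.card_tgt_eq_le_one hp u) ?_
    simpa [filter_nonempty_iff] using hp.exists_src_iff_exists_tgt hr ht
  · rw [outFlow_pathFlow]
    exact hone (L.card_src_eq_le_one hp _) ⟨⟨0, hn⟩, by simpa using hp.2.1 ⟨0, hn⟩ rfl⟩
  · rw [inFlow_pathFlow]
    exact hone (L.card_tgt_eq_le_one hp _)
      ⟨⟨n - 1, by omega⟩, by simpa using hp.2.2.1 ⟨n - 1, by omega⟩ (by simp; omega)⟩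

variable {y z : D.Arc → ℝ}

theorem eq_zero_of_outFlow_root_eq_zero (hy : ∀ a, 0 ≤ y a) (hbal : D.IsBalanced y)
    (h₀ : D.outFlow D.root y = 0) : y = 0 := by
  suffices ∀ k, ∀ a, (D.lay a : ℕ) = k → y a = 0 from funext fun a => this _ a rfl
  intro k
  induction k using Nat.strong_induction_on with
  | _ k ih =>
  rintro a rfl
  refine le_antisymm ((D.le_outFlow_src hy a).trans_eq ?_) (hy a)
  by_cases hr : D.src a = D.root
  · rwa [hr]
  rw [hbal _ hr (L.src_ne_terminal a), inFlow_apply]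
  refine sum_eq_zero fun b hb => ih _ ?_ b rfl
  have := L.lay_add_one_of_tgt_eq_src (mem_filter.1 hb).2
  omega

theorem eq_of_le (hy : D.IsUnitFlow y) (hz : D.IsUnitFlow z) (hle : ∀ a, z a ≤ y a) : y = z := by
  have := L.eq_zero_of_outFlow_root_eq_zero (y := y - z) (fun a => sub_nonneg.2 (hle a))
    (fun u hr ht => by simp only [map_sub, hy.balanced u hr ht, hz.balanced u hr ht])
    (by simp only [map_sub, hy.outFlow_root, hz.outFlow_root, sub_self])
  exact sub_eq_zero.1 this

theorem exists_src_eq_tgt_pos (hy : ∀ a, 0 ≤ y a) (hbal : D.IsBalanced y) {a : D.Arc}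
    (ha : 0 < y a) (ht : D.tgt a ≠ D.terminal) : ∃ b, D.src b = D.tgt a ∧ 0 < y b := by
  refine D.exists_src_eq_of_outFlow_pos ?_
  rw [hbal _ (L.tgt_ne_root a) ht]
  exact ha.trans_le (D.le_inFlow_tgt hy a)

theorem exists_isPath_pos (hy : ∀ a, 0 ≤ y a) (hbal : D.IsBalanced y)
    (hroot : 0 < D.outFlow D.root y) : ∃ p, D.IsPath p ∧ ∀ i, 0 < y (p i) := by
  obtain ⟨a₀, ha₀, hy₀⟩ := D.exists_src_eq_of_outFlow_pos hroot
  have hlast (a : D.Arc) (ha : 0 < y a) (hn : (D.lay a : ℕ) + 1 = n) : D.tgt a = D.terminal := by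
    by_contra ht
    obtain ⟨b, hb, -⟩ := L.exists_src_eq_tgt_pos hy hbal ha ht
    have := L.lay_add_one_of_tgt_eq_src hb.symm
    omega
  have hstep (a : D.Arc) (ha : 0 < y a) (hn : (D.lay a : ℕ) + 1 < n) :
      ∃ b, D.src b = D.tgt a ∧ 0 < y b := by
    refine L.exists_src_eq_tgt_pos hy hbal ha fun ht => ?_
    have := L.level_tgt a
    rw [ht, L.level_terminal] at this
    omega
  choose! next hnext_src hnext_pos using hstep
  have hinv (k : ℕ) (hk : k < n) : 0 < y (next^[k] a₀) ∧ (D.lay (next^[k] a₀) : ℕ) = k := by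
    induction k with
    | zero => exact ⟨hy₀, by rw [Function.iterate_zero_apply, ← L.level_src, ha₀, L.level_root]⟩
    | succ k ih =>
      obtain ⟨hpos, hlay⟩ := ih (by omega)
      rw [Function.iterate_succ_apply']
      refine ⟨hnext_pos _ hpos (by omega), ?_⟩
      rw [← L.lay_add_one_of_tgt_eq_src (hnext_src _ hpos (by omega)).symm, hlay]
  refine ⟨fun i => next^[i] a₀, ⟨fun i => Fin.ext (hinv i i.2).2, fun i hi => ?_,
    fun i hi => hlast _ (hinv i i.2).1 (by rw [(hinv i i.2).2, hi]), fun i hi => ?_⟩,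
    fun i => (hinv i i.2).1⟩
  · simpa [hi] using ha₀
  · simp only [Function.iterate_succ_apply']
    obtain ⟨hpos, hlay⟩ := hinv i i.2
    exact (hnext_src _ hpos (by omega)).symm

theorem mem_convexHull_pathFlow [DecidableEq D.Arc] (hn : 0 < n) (hy : D.IsUnitFlow y) :
    y ∈ convexHull ℝ (pathFlow '' {p | D.IsPath p}) := by
  induction hk : #{a | y a ≠ 0} using Nat.strong_induction_on generalizing y with
  | _ k ih =>
  obtain ⟨p, hp, hpos⟩ :=
    L.exists_isPath_pos hy.nonneg hy.balanced (hy.outFlow_root ▸ one_pos)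
  have : Nonempty (Fin n) := ⟨⟨0, hn⟩⟩
  obtain ⟨i₀, hmin⟩ := Finite.exists_min fun i => y (p i)
  set ε := y (p i₀)
  have hle := hp.smul_pathFlow_le hy.nonneg hmin
  have hε_le : ε ≤ 1 :=
    calc ε ≤ y (p ⟨0, hn⟩) := hmin _
      _ ≤ D.outFlow D.root y := hp.2.1 ⟨0, hn⟩ rfl ▸ D.le_outFlow_src hy.nonneg _
      _ = 1 := hy.outFlow_root
  have hpf := L.isUnitFlow_pathFlow hn hp
  have hp_mem : pathFlow p ∈ convexHull ℝ (pathFlow '' {p | D.IsPath p}) :=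
    subset_convexHull ℝ _ ⟨p, hp, rfl⟩
  obtain hε | hε := hε_le.lt_or_eq
  · set y' := (1 - ε)⁻¹ • (y - ε • pathFlow p)
    have hy' : D.IsUnitFlow y' := hy.inv_one_sub_smul_sub hpf hε hle
    have hy_eq : y = ε • pathFlow p + (1 - ε) • y' := by
      ext a
      simp only [y', Pi.add_apply, Pi.smul_apply, Pi.sub_apply, smul_eq_mul]
      field_simp [sub_ne_zero.2 hε.ne']
      ring
    rw [hy_eq]
    exact convex_convexHull ℝ _ hp_mem (ih _ (hk ▸ hp.card_support_smul_sub_lt hpos _ i₀) hy' rfl)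
      (hpos i₀).le (by linarith) (by ring)
  · rw [L.eq_of_le hy hpf fun a => by simpa [hε] using hle a]
    exact hp_mem

theorem setOf_isUnitFlow_eq_convexHull [DecidableEq D.Arc] (hn : 0 < n) :
    {y | D.IsUnitFlow y} = convexHull ℝ (pathFlow '' {p | D.IsPath p}) :=
  Set.Subset.antisymm (fun _ hy => L.mem_convexHull_pathFlow hn hy) <|
    convexHull_min (by rintro _ ⟨p, hp, rfl⟩; exact L.isUnitFlow_pathFlow hn hp)
      D.convex_setOf_isUnitFlow

end Layering

end DD

theorem stmt1_general {n : ℕ} (D : DD n) [Fintype D.Arc] [DecidableEq D.V]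
    (hn : 0 < n)
    (nlay : D.V → ℕ)
    (hsrc : ∀ a, nlay (D.src a) = (D.lay a : ℕ))
    (htgt : ∀ a, nlay (D.tgt a) = (D.lay a : ℕ) + 1)
    (hroot : nlay D.root = 0) (hterm : nlay D.terminal = n) :
    {x : Fin n → ℝ | ∃ y : D.Arc → ℝ, (x, y) ∈ NF D}
      = convexHull ℝ (D.pointR '' {p | D.IsPath p}) := by
  classical
  let L : D.Layering := ⟨nlay, hsrc, htgt, hroot, hterm⟩
  have hproj : {x | ∃ y, (x, y) ∈ NF D} = D.linking '' {y | D.IsUnitFlow y} := by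
    ext x
    simp only [Set.mem_ofPred_eq, Set.mem_image, D.mem_NF_iff]
  rw [hproj, L.setOf_isUnitFlow_eq_convexHull hn, LinearMap.image_convexHull, Set.image_image]
  exact congrArg _ (Set.image_congr fun p hp => hp.linking_pathFlow)

/-- For a decision diagram with binary arc values, the projection of the network flow
polytope `NF(D)` onto the `x`-variables equals the convex hull of `Sol(D)`. -/
theorem stmt1 {n : ℕ} (D : DD n) [Fintype D.Arc] [DecidableEq D.V]
    (hn : 0 < n)
    (nlay : D.V → ℕ)
    (hsrc : ∀ a, nlay (D.src a) = (D.lay a : ℕ))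
    (htgt : ∀ a, nlay (D.tgt a) = (D.lay a : ℕ) + 1)
    (hroot : nlay D.root = 0) (hterm : nlay D.terminal = n)
    (hbin : ∀ a : D.Arc, D.val a = 0 ∨ D.val a = 1) :
    {x : Fin n → ℝ | ∃ y : D.Arc → ℝ, (x, y) ∈ NF D}
      = convexHull ℝ (D.pointR '' {p | D.IsPath p}) :=
  stmt1_general D hn nlay hsrc htgt hroot hterm
end

section
/- Suppose the merging operator ⊕ satisfies conditions (C1)-(C3) with respect to a recursive formulation of a maximization problem. Then for any relaxed state S̃ that relaxes a reachable state S at stage i, the optimal value function satisfies V_i(S) ≤ Ṽ_i(S̃), where Ṽ is the value function of the relaxed recursion; in particular the relaxed recursion's root value is an upper bound on the optimal value. -/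
theorem le_of_isGreatest_bellman {σ α β : Type*} [AddCommMonoid β] [PartialOrder β]
    [IsOrderedAddMonoid β] {X : σ → Set α} {g c : σ → α → β} {S St : σ} {v vt : β}
    (hX : X S ⊆ X St) (hg : ∀ x ∈ X S, g S x ≤ g St x) (hc : ∀ x ∈ X S, c S x ≤ c St x)
    (hv : IsGreatest {r | ∃ x ∈ X S, r = g S x + c S x} v)
    (hvt : IsGreatest {r | ∃ x ∈ X St, r = g St x + c St x} vt) :
    v ≤ vt := by
  obtain ⟨⟨x, hx, rfl⟩, -⟩ := hv
  exact (add_le_add (hg x hx) (hc x hx)).trans (hvt.2 ⟨x, hX hx, rfl⟩)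

/-- If the relaxation relation (induced by a merging operator satisfying (C1)-(C3))
holds between a relaxed state `St` and a state `S` at stage `i`, then the value
function of the (common) Bellman recursion satisfies `V i S ≤ V i St`; in particular
the relaxed recursion's root value is an upper bound on the optimal value. -/
theorem stmt6 {σ : Type} (n : ℕ)
    (Xact : ℕ → σ → Set ℤ) (φ : ℕ → σ → ℤ → σ) (g : ℕ → σ → ℤ → ℝ)
    (V : ℕ → σ → ℝ)
    (Rel : ℕ → σ → σ → Prop)
    (hRel : ∀ i St S, Rel i St S ↔
      (Xact i S ⊆ Xact i St ∧ ∀ x ∈ Xact i S, g i S x ≤ g i St x))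
    (hC3 : ∀ i St S, Rel i St S → ∀ x ∈ Xact i S, Rel (i+1) (φ i St x) (φ i S x))
    (hBell : ∀ i, i < n → ∀ S : σ,
      IsGreatest {r | ∃ x ∈ Xact i S, r = g i S x + V (i+1) (φ i S x)} (V i S))
    (hEnd : ∀ S, V n S = 0) :
    ∀ i ≤ n, ∀ S St : σ, Rel i St S → V i S ≤ V i St := by
  intro i hi
  induction hi using Nat.decreasingInduction with
  | self => intro S St _; rw [hEnd, hEnd]
  | of_succ i hi ih =>
    intro S St hrel
    obtain ⟨hX, hg⟩ := (hRel i St S).mp hrel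
    exact le_of_isGreatest_bellman (c := fun S x => V (i + 1) (φ i S x)) hX hg
      (fun x hx => ih _ _ (hC3 i St S hrel x hx)) (hBell i hi S) (hBell i hi St)
end

section
/- In the iterative refinement procedure, splitting a node preserves the solution set: if a node u is replaced by nodes u and u' such that u' receives a nonempty subset of u's incoming arcs and a copy of all of u's outgoing arcs (with u keeping the remaining incoming arcs and all outgoing arcs), then the set of root-to-terminal paths' encoded assignments of the resulting diagram equals that of the original diagram. -/
open Classical in
/-- Splitting node `u`: a new node (the `Sum.inr` node) receives the incoming arcs
in `I'` and a duplicate of every outgoing arc of `u`; `u` keeps the remaining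
incoming arcs and all its outgoing arcs. -/
noncomputable def splitDD {n : ℕ} (D : DD n) (u : D.V) (I' : Set D.Arc) : DD n where
  V := D.V ⊕ Unit
  Arc := D.Arc ⊕ {a : D.Arc // D.src a = u}
  src := fun a => match a with
    | .inl a => .inl (D.src a)
    | .inr _ => .inr ()
  tgt := fun a => match a with
    | .inl a => if a ∈ I' then .inr () else .inl (D.tgt a)
    | .inr a => .inl (D.tgt a.1)
  lay := fun a => match a with
    | .inl a => D.lay a
    | .inr a => D.lay a.1
  val := fun a => match a with
    | .inl a => D.val a
    | .inr a => D.val a.1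
  len := fun a => match a with
    | .inl a => D.len a
    | .inr a => D.len a.1
  root := .inl D.root
  terminal := .inl D.terminal


namespace DD

variable {n : ℕ}

structure Hom (D E : DD n) where
  arc : D.Arc → E.Arc
  node : D.V → E.V
  src_arc : ∀ a, E.src (arc a) = node (D.src a)
  tgt_arc : ∀ a, E.tgt (arc a) = node (D.tgt a)
  lay_arc : ∀ a, E.lay (arc a) = D.lay a
  val_arc : ∀ a, E.val (arc a) = D.val a
  node_root : node D.root = E.root
  node_terminal : node D.terminal = E.terminal

namespace Hom

variable {D E : DD n} {p : Fin n → D.Arc}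

theorem isPath (f : D.Hom E) (hp : D.IsPath p) : E.IsPath (f.arc ∘ p) := by
  obtain ⟨hlay, hsrc, htgt, hchain⟩ := hp
  refine ⟨fun i => ?_, fun i hi => ?_, fun i hi => ?_, fun i hi => ?_⟩
  · simp only [Function.comp_apply, f.lay_arc, hlay]
  · simp only [Function.comp_apply, f.src_arc, hsrc i hi, f.node_root]
  · simp only [Function.comp_apply, f.tgt_arc, htgt i hi, f.node_terminal]
  · simp only [Function.comp_apply, f.tgt_arc, f.src_arc, hchain i hi]

theorem point_comp (f : D.Hom E) : E.point (f.arc ∘ p) = D.point p :=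
  funext fun i => f.val_arc (p i)

theorem sol_subset (f : D.Hom E) : D.Sol ⊆ E.Sol := by
  rintro _ ⟨p, hp, rfl⟩
  exact ⟨f.arc ∘ p, f.isPath hp, f.point_comp⟩

end Hom

end DD

namespace splitDD

variable {n : ℕ} {D : DD n} {u : D.V} {I' : Set D.Arc}

def collapse (hI : ∀ a ∈ I', D.tgt a = u) : (splitDD D u I').Hom D where
  arc := Sum.elim id Subtype.val
  node := Sum.elim id fun _ => u
  src_arc
    | .inl _ => rfl
    | .inr a => a.2
  tgt_arc
    | .inl a => by by_cases ha : a ∈ I' <;> simp [splitDD, ha, hI]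
    | .inr _ => rfl
  lay_arc
    | .inl _ | .inr _ => rfl
  val_arc
    | .inl _ | .inr _ => rfl
  node_root := rfl
  node_terminal := rfl

/-- Whether arc `k` of the lifted path leaves the new node. The negated conjunct is needed because
the duplicate of a loop at `u` in `I'` returns to `u`, not to the new node. -/
def AtNewNode (I' : Set D.Arc) (p : Fin n → D.Arc) : ℕ → Prop
  | 0 => False
  | k + 1 => ¬ AtNewNode I' p k ∧ ∃ hk : k < n, p ⟨k, hk⟩ ∈ I'

variable {p : Fin n → D.Arc}

theorem atNewNode_succ_iff (i : Fin n) :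
    AtNewNode I' p (i.val + 1) ↔ ¬ AtNewNode I' p i ∧ p i ∈ I' :=
  and_congr_right' ⟨fun ⟨_, h⟩ => h, fun h => ⟨i.isLt, h⟩⟩

theorem src_eq_of_atNewNode (hI : ∀ a ∈ I', D.tgt a = u) (hp : D.IsPath p) {i : Fin n}
    (h : AtNewNode I' p i) : D.src (p i) = u := by
  obtain ⟨i, hi⟩ := i
  cases i with
  | zero => exact h.elim
  | succ k =>
    obtain ⟨-, hk, hmem⟩ := h
    rw [← hp.2.2.2 ⟨k, hk⟩ hi, hI _ hmem]

noncomputable def lift (hI : ∀ a ∈ I', D.tgt a = u) (hp : D.IsPath p) :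
    Fin n → (splitDD D u I').Arc := fun i =>
  open Classical in
  if h : AtNewNode I' p i then .inr ⟨p i, src_eq_of_atNewNode hI hp h⟩ else .inl (p i)

variable (hI : ∀ a ∈ I', D.tgt a = u) (hp : D.IsPath p)

theorem lift_of_atNewNode {i : Fin n} (h : AtNewNode I' p i) :
    lift hI hp i = Sum.inr ⟨p i, src_eq_of_atNewNode hI hp h⟩ :=
  dif_pos h

theorem lift_of_not_atNewNode {i : Fin n} (h : ¬ AtNewNode I' p i) :
    lift hI hp i = Sum.inl (p i) :=
  dif_neg h

theorem collapse_arc_comp_lift : (collapse hI).arc ∘ lift hI hp = p := by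
  funext i
  by_cases h : AtNewNode I' p i
  · rw [Function.comp_apply, lift_of_atNewNode hI hp h]
    rfl
  · rw [Function.comp_apply, lift_of_not_atNewNode hI hp h]
    rfl

open Classical in
theorem src_lift (i : Fin n) :
    (splitDD D u I').src (lift hI hp i) =
      if AtNewNode I' p i then Sum.inr () else Sum.inl (D.src (p i)) := by
  by_cases h : AtNewNode I' p i
  · rw [lift_of_atNewNode hI hp h, if_pos h]
    rfl
  · rw [lift_of_not_atNewNode hI hp h, if_neg h]
    rfl

open Classical in
theorem tgt_lift (i : Fin n) :
    (splitDD D u I').tgt (lift hI hp i) =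
      if AtNewNode I' p (i.val + 1) then Sum.inr () else Sum.inl (D.tgt (p i)) := by
  by_cases h : AtNewNode I' p i
  · rw [lift_of_atNewNode hI hp h, if_neg fun h' => ((atNewNode_succ_iff i).1 h').1 h]
    rfl
  · rw [lift_of_not_atNewNode hI hp h]
    by_cases hmem : p i ∈ I' <;> simp [splitDD, h, hmem, atNewNode_succ_iff]

theorem isPath_lift (hut : u ≠ D.terminal) : (splitDD D u I').IsPath (lift hI hp) := by
  refine ⟨fun i => ?_, fun i hi => ?_, fun i hi => ?_, fun i hi => ?_⟩
  · rw [← (collapse hI).lay_arc, ← Function.comp_apply (f := (collapse hI).arc),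
      collapse_arc_comp_lift, hp.1]
  · have hnot : ¬ AtNewNode I' p i := by rw [hi]; exact not_false
    rw [src_lift, if_neg hnot, hp.2.1 i hi]
    rfl
  · have hnot : ¬ AtNewNode I' p (i.val + 1) := fun h =>
      hut ((hI _ ((atNewNode_succ_iff i).1 h).2).symm.trans (hp.2.2.1 i hi))
    rw [tgt_lift, if_neg hnot, hp.2.2.1 i hi]
    rfl
  · rw [tgt_lift, src_lift, hp.2.2.2 i hi]

end splitDD

theorem DD.sol_subset_sol_splitDD {n : ℕ} {D : DD n} {u : D.V} {I' : Set D.Arc}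
    (hI : ∀ a ∈ I', D.tgt a = u) (hut : u ≠ D.terminal) : D.Sol ⊆ (splitDD D u I').Sol := by
  rintro _ ⟨p, hp, rfl⟩
  refine ⟨splitDD.lift hI hp, splitDD.isPath_lift hI hp hut, ?_⟩
  rw [← (splitDD.collapse hI).point_comp, splitDD.collapse_arc_comp_lift]

theorem stmt12_general {n : ℕ} (D : DD n) (u : D.V) (I' : Set D.Arc)
    (hut : u ≠ D.terminal)
    (hI : ∀ a ∈ I', D.tgt a = u) :
    (splitDD D u I').Sol = D.Sol :=
  (splitDD.collapse hI).sol_subset.antisymm (DD.sol_subset_sol_splitDD hI hut)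

/-- Splitting an internal node `u` along a nonempty proper subset `I'` of its
incoming arcs preserves the set of encoded assignments. -/
theorem stmt12 {n : ℕ} (D : DD n) (u : D.V) (I' : Set D.Arc)
    (hur : u ≠ D.root) (hut : u ≠ D.terminal)
    (hI : ∀ a ∈ I', D.tgt a = u)
    (hne : I'.Nonempty)
    (hproper : ∃ a, D.tgt a = u ∧ a ∉ I') :
    (splitDD D u I').Sol = D.Sol :=
  stmt12_general D u I' hut hI
end
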